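/- arXiv:1311.4984 — 4 statements merged into one kernel-verified Lean document; each statement's English description precedes it below -/
import Mathlib

section
/- Let P and Q be real (N+1)×(N+1) matrices with P symmetric positive definite and Q + Qᵀ = −e₀e₀ᵀ + e_N e_Nᵀ (e₀, e_N the first and last standard basis vectors). Let λ ∈ ℂ with Re(λ) ≤ 0, f ∈ ℂ, and suppose U ∈ ℂ^{N+1} satisfies P⁻¹Q U = λU − P⁻¹(U₀ − f)e₀. Then |U_N|² − 2·Re(λ)·U*PU = |f|² − |U₀ − f|². In particular |U_N|² ≤ |f|². -/
/-!
Multiply the scheme by `P` and pair it with `U`. The SBP property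
`Q + Qᵀ = -e₀e₀ᵀ + e_Ne_Nᵀ` makes `2 Re (U* Q U)` the boundary term `|U_N|² - |U₀|²`,
`U* P U` is real and nonnegative, and the penalty term is absorbed by the polarization identity
`2 Re (conj U₀ (U₀ - f)) = |U₀|² + |U₀ - f|² - |f|²`.
-/

open Matrix

open Complex ComplexConjugate

section

variable {n R : Type*} [Fintype n]

lemma two_mul_dotProduct_mulVec_self [CommRing R] (A : Matrix n n R) (x : n → R) :
    2 * (x ⬝ᵥ A *ᵥ x) = x ⬝ᵥ (A + Aᵀ) *ᵥ x := by
  rw [add_mulVec, dotProduct_add, mulVec_transpose, dotProduct_comm x (x ᵥ* A),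
    ← dotProduct_mulVec, two_mul]

lemma dotProduct_vecMulVec_single_mulVec [CommRing R] [DecidableEq n] (i : n) (x : n → R) :
    x ⬝ᵥ vecMulVec (Pi.single i 1) (Pi.single i 1) *ᵥ x = x i ^ 2 := by
  simp [vecMulVec_mulVec, dotProduct_smul, sq]

lemma re_star_dotProduct_map_ofReal_mulVec (A : Matrix n n ℝ) (U : n → ℂ) :
    (star U ⬝ᵥ A.map ofReal *ᵥ U).re =
      (re ∘ U) ⬝ᵥ A *ᵥ (re ∘ U) + (im ∘ U) ⬝ᵥ A *ᵥ (im ∘ U) := by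
  simp only [dotProduct, mulVec, Finset.mul_sum, re_sum, ← Finset.sum_add_distrib]
  refine Finset.sum_congr rfl fun i _ ↦ Finset.sum_congr rfl fun j _ ↦ ?_
  simp [mul_re, mul_im]

lemma Matrix.PosSemidef.re_star_dotProduct_map_ofReal_mulVec_nonneg {P : Matrix n n ℝ}
    (hP : P.PosSemidef) (U : n → ℂ) : 0 ≤ (star U ⬝ᵥ P.map ofReal *ᵥ U).re := by
  rw [re_star_dotProduct_map_ofReal_mulVec]
  simpa using add_nonneg (hP.dotProduct_mulVec_nonneg (re ∘ U))
    (hP.dotProduct_mulVec_nonneg (im ∘ U))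

lemma two_mul_re_star_dotProduct_map_ofReal_mulVec [DecidableEq n] {Q : Matrix n n ℝ} {i j : n}
    (hQ : Q + Qᵀ = -vecMulVec (Pi.single i 1) (Pi.single i 1) +
      vecMulVec (Pi.single j 1) (Pi.single j 1)) (U : n → ℂ) :
    2 * (star U ⬝ᵥ Q.map ofReal *ᵥ U).re = ‖U j‖ ^ 2 - ‖U i‖ ^ 2 := by
  simp only [re_star_dotProduct_map_ofReal_mulVec, mul_add, two_mul_dotProduct_mulVec_self, hQ,
    add_mulVec, neg_mulVec, dotProduct_add, dotProduct_neg, dotProduct_vecMulVec_single_mulVec,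
    Complex.sq_norm, normSq_apply, Function.comp_apply]
  ring

lemma mulVec_eq_sub_of_nonsing_inv_mul_mulVec [DecidableEq n] [CommRing R] {A B : Matrix n n R}
    {u v w : n → R} (hA : IsUnit A.det) (h : (A⁻¹ * B) *ᵥ u = v - A⁻¹ *ᵥ w) :
    B *ᵥ u = A *ᵥ v - w := by
  have := congrArg (A *ᵥ ·) h
  simpa [mulVec_mulVec, mul_nonsing_inv_cancel_left _ _ hA, mulVec_sub,
    mul_nonsing_inv _ hA] using this

end

lemma two_mul_re_conj_mul_sub (a f : ℂ) :
    2 * (conj a * (a - f)).re = ‖a‖ ^ 2 + ‖a - f‖ ^ 2 - ‖f‖ ^ 2 := by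
  simp only [Complex.sq_norm, normSq_apply, mul_re, conj_re, conj_im, sub_re, sub_im]
  ring

theorem stmt_8_general {N : ℕ} (P Q : Matrix (Fin (N + 1)) (Fin (N + 1)) ℝ)
    (hP : P.PosDef)
    (hQ : Q + Qᵀ = -Matrix.vecMulVec (Pi.single 0 1) (Pi.single 0 1) +
      Matrix.vecMulVec (Pi.single (Fin.last N) 1) (Pi.single (Fin.last N) 1))
    (lam : ℂ) (hlam : lam.re ≤ 0) (f : ℂ) (U : Fin (N + 1) → ℂ)
    (hU : ((P.map Complex.ofReal)⁻¹ * Q.map Complex.ofReal).mulVec U =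
      lam • U - ((P.map Complex.ofReal)⁻¹).mulVec ((U 0 - f) • (Pi.single 0 1 : Fin (N + 1) → ℂ))) :
    (‖U (Fin.last N)‖ ^ 2 -
        2 * lam.re * (star U ⬝ᵥ (P.map Complex.ofReal).mulVec U).re
          = ‖f‖ ^ 2 - ‖U 0 - f‖ ^ 2) ∧
      ‖U (Fin.last N)‖ ^ 2 ≤ ‖f‖ ^ 2 := by
  set r := star U ⬝ᵥ P.map ofReal *ᵥ U
  have hdet : IsUnit (P.map ofReal).det :=
    (isUnit_iff_isUnit_det _).mp (hP.isUnit.map ofRealHom.mapMatrix)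
  have hscheme := mulVec_eq_sub_of_nonsing_inv_mul_mulVec hdet hU
  have henergy : star U ⬝ᵥ Q.map ofReal *ᵥ U = lam * r - conj (U 0) * (U 0 - f) := by
    rw [hscheme, mulVec_smul, dotProduct_sub, dotProduct_smul, dotProduct_smul, dotProduct_single]
    simp [r, mul_comm]
  have hreal : r.im = 0 :=
    (hP.isHermitian.map ofReal fun _ ↦ (conj_ofReal _).symm).im_star_dotProduct_mulVec_self U
  have hnonneg : 0 ≤ r.re := hP.posSemidef.re_star_dotProduct_map_ofReal_mulVec_nonneg U
  have hboundary := two_mul_re_star_dotProduct_map_ofReal_mulVec hQ U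
  rw [henergy, sub_re, mul_re, hreal, mul_zero, sub_zero] at hboundary
  have hpolar := two_mul_re_conj_mul_sub (U 0) f
  have hdissipation : lam.re * r.re ≤ 0 := mul_nonpos_of_nonpos_of_nonneg hlam hnonneg
  exact ⟨by linarith, by linarith [sq_nonneg ‖U 0 - f‖]⟩

/-- Discrete energy identity for the SBP-SAT time discretization of `u' = λu`
with the initial condition enforced weakly with penalty `σ = −1`. -/
theorem stmt_8 {N : ℕ} (P Q : Matrix (Fin (N + 1)) (Fin (N + 1)) ℝ)
    (hP : P.PosDef) (hPsymm : P.IsSymm)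
    (hQ : Q + Qᵀ = -Matrix.vecMulVec (Pi.single 0 1) (Pi.single 0 1) +
      Matrix.vecMulVec (Pi.single (Fin.last N) 1) (Pi.single (Fin.last N) 1))
    (lam : ℂ) (hlam : lam.re ≤ 0) (f : ℂ) (U : Fin (N + 1) → ℂ)
    (hU : ((P.map Complex.ofReal)⁻¹ * Q.map Complex.ofReal).mulVec U =
      lam • U - ((P.map Complex.ofReal)⁻¹).mulVec ((U 0 - f) • (Pi.single 0 1 : Fin (N + 1) → ℂ))) :
    (‖U (Fin.last N)‖ ^ 2 -
        2 * lam.re * (star U ⬝ᵥ (P.map Complex.ofReal).mulVec U).re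
          = ‖f‖ ^ 2 - ‖U 0 - f‖ ^ 2) ∧
      ‖U (Fin.last N)‖ ^ 2 ≤ ‖f‖ ^ 2 :=
  stmt_8_general P Q hP hQ lam hlam f U hU
end

section
/- Let P be a diagonal positive definite (N+1)×(N+1) matrix and Q a matrix with Q + Qᵀ = −e₀e₀ᵀ + e_Ne_Nᵀ. Let u ∈ ℝ^{N+1}, let U = diag(u) and let u² denote the componentwise square of u. Then 2·uᵀQ(u²) + 2·uᵀ(PUP⁻¹)Q u = 2·(u_N³ − u₀³). -/
open Matrix

/-- Discrete analogue of the 1/3-splitting for Burgers' equation: for a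
diagonal-norm SBP operator the split quadratic forms telescope to boundary
terms. -/
theorem stmt_11 {N : ℕ} (P Q : Matrix (Fin (N + 1)) (Fin (N + 1)) ℝ)
    (hPdiag : ∃ d : Fin (N + 1) → ℝ, P = Matrix.diagonal d) (hP : P.PosDef)
    (hQ : Q + Qᵀ = -Matrix.vecMulVec (Pi.single 0 1) (Pi.single 0 1) +
      Matrix.vecMulVec (Pi.single (Fin.last N) 1) (Pi.single (Fin.last N) 1))
    (u : Fin (N + 1) → ℝ) (U : Matrix (Fin (N + 1)) (Fin (N + 1)) ℝ)
    (hU : U = Matrix.diagonal u) :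
    2 * (u ⬝ᵥ Q.mulVec fun i => u i ^ 2) + 2 * (u ⬝ᵥ (P * U * P⁻¹ * Q).mulVec u)
      = 2 * (u (Fin.last N) ^ 3 - u 0 ^ 3) := by
  obtain ⟨d, rfl⟩ := hPdiag
  have hd : ∀ i, 0 < d i := (Matrix.posDef_diagonal_iff.mp hP)
  -- P U P⁻¹ = U
  have hinv : (Matrix.diagonal d)⁻¹ = Matrix.diagonal (fun i => (d i)⁻¹) := by
    apply Matrix.inv_eq_right_inv
    rw [Matrix.diagonal_mul_diagonal, ← Matrix.diagonal_one]
    have he : (fun i => d i * (d i)⁻¹) = fun _ => (1 : ℝ) :=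
      funext fun i => mul_inv_cancel₀ (hd i).ne'
    rw [he]
  have hPUP : Matrix.diagonal d * U * (Matrix.diagonal d)⁻¹ = U := by
    rw [hU, hinv, Matrix.diagonal_mul_diagonal, Matrix.diagonal_mul_diagonal]
    have he : (fun i => d i * u i * (d i)⁻¹) = u := by
      funext i
      have h0 : d i ≠ 0 := (hd i).ne'
      field_simp
    rw [he]
  rw [hPUP, hU]
  -- second term: u ⬝ (diag u * Q) u = u² ⬝ Q u
  have h2 : u ⬝ᵥ (Matrix.diagonal u * Q).mulVec u
      = (fun i => u i ^ 2) ⬝ᵥ Q.mulVec u := by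
    rw [← Matrix.mulVec_mulVec]
    simp [dotProduct, Matrix.mulVec_diagonal, sq, mul_assoc]
  -- first term: u ⬝ Q u² = u² ⬝ Qᵀ u
  have h1 : (u ⬝ᵥ Q.mulVec fun i => u i ^ 2)
      = (fun i => u i ^ 2) ⬝ᵥ Qᵀ.mulVec u := by
    rw [Matrix.dotProduct_mulVec, ← Matrix.mulVec_transpose,
      dotProduct_comm]
  rw [h1, h2]
  have key : (fun i => u i ^ 2) ⬝ᵥ Qᵀ.mulVec u + (fun i => u i ^ 2) ⬝ᵥ Q.mulVec u
      = (fun i => u i ^ 2) ⬝ᵥ (Q + Qᵀ).mulVec u := by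
    rw [Matrix.add_mulVec, dotProduct_add]
    ring
  have : 2 * ((fun i => u i ^ 2) ⬝ᵥ Qᵀ.mulVec u)
      + 2 * ((fun i => u i ^ 2) ⬝ᵥ Q.mulVec u)
      = 2 * ((fun i => u i ^ 2) ⬝ᵥ (Q + Qᵀ).mulVec u) := by rw [← key]; ring
  rw [this, hQ]
  rw [Matrix.add_mulVec, Matrix.neg_mulVec, dotProduct_add,
    dotProduct_neg]
  have hvmv : ∀ j : Fin (N + 1),
      (fun i => u i ^ 2) ⬝ᵥ (Matrix.vecMulVec (Pi.single j 1)
        (Pi.single j 1)).mulVec u = u j ^ 3 := by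
    intro j
    simp [Matrix.vecMulVec, Matrix.mulVec, dotProduct, Pi.single_apply,
      Finset.sum_ite_eq', mul_ite, ite_mul, Finset.mul_sum]
    ring
  rw [hvmv 0, hvmv (Fin.last N)]
  ring
end

section
/- Let P, Q be real (N+1)×(N+1) matrices, P diagonal positive definite, Q + Qᵀ = −e₀e₀ᵀ + e_Ne_Nᵀ; let A be a diagonal positive definite matrix. Define the weighted norm ‖v‖²_ξ = vᵀA⁻¹Pv. Then for any solution of v'(t) = −A P⁻¹Q v(t) − ½[A₁₁P⁻¹]₀ v₀(t) e₀ (SAT for homogeneous left boundary data), one has d/dt ‖v(t)‖²_ξ = −v_N(t)². -/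
/-!
Let `M = A⁻¹P` and `G = AP⁻¹`. Both are diagonal, so `M` is symmetric, `MG = 1`, and the SAT term
`½ G₀₀ v₀ e₀` equals `G (½ v₀ e₀)`. Hence `d/dt vᵀMv = 2 vᵀMv' = -2 vᵀQv - v₀²`, and the
summation-by-parts property `Q + Qᵀ = -e₀e₀ᵀ + e_Ne_Nᵀ` gives `2 vᵀQv = v_N² - v₀²`.
-/

open Matrix

section Calculus

variable {𝕜 : Type*} [NontriviallyNormedField 𝕜] {m n : Type*} [Fintype n]

theorem HasDerivAt.dotProduct {u w : 𝕜 → n → 𝕜} {u' w' : n → 𝕜} {t : 𝕜}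
    (hu : HasDerivAt u u' t) (hw : HasDerivAt w w' t) :
    HasDerivAt (fun s => u s ⬝ᵥ w s) (u' ⬝ᵥ w t + u t ⬝ᵥ w') t := by
  rw [hasDerivAt_pi] at hu hw
  unfold _root_.dotProduct
  simp only [← Finset.sum_add_distrib]
  exact HasDerivAt.fun_sum fun i _ => (hu i).mul (hw i)

theorem HasDerivAt.mulVec (M : Matrix m n 𝕜) {v : 𝕜 → n → 𝕜} {v' : n → 𝕜} {t : 𝕜}
    (hv : HasDerivAt v v' t) : HasDerivAt (fun s => M *ᵥ v s) (M *ᵥ v') t :=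
  hasDerivAt_pi.2 fun i => by
    have h := (hasDerivAt_const t (M i)).dotProduct hv
    rw [zero_dotProduct, zero_add] at h
    exact h

theorem HasDerivAt.dotProduct_mulVec_self {M : Matrix n n 𝕜} (hM : M.IsSymm)
    {v : 𝕜 → n → 𝕜} {v' : n → 𝕜} {t : 𝕜} (hv : HasDerivAt v v' t) :
    HasDerivAt (fun s => v s ⬝ᵥ M *ᵥ v s) (2 * (v t ⬝ᵥ M *ᵥ v')) t := by
  convert hv.dotProduct (hv.mulVec M) using 1
  rw [← dotProduct_transpose_mulVec, hM.eq, two_mul]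

end Calculus

section Algebra

variable {R : Type*} [CommRing R] {n : Type*} [Fintype n]

theorem dotProduct_add_transpose_mulVec_self (Q : Matrix n n R) (x : n → R) :
    x ⬝ᵥ (Q + Qᵀ) *ᵥ x = 2 * (x ⬝ᵥ Q *ᵥ x) := by
  rw [add_mulVec, dotProduct_add, dotProduct_transpose_mulVec, two_mul]

variable [DecidableEq n]

theorem dotProduct_vecMulVec_single_mulVec_self (j : n) (x : n → R) :
    x ⬝ᵥ vecMulVec (Pi.single j 1) (Pi.single j 1) *ᵥ x = x j ^ 2 := by
  simp [vecMulVec_mulVec, sq]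

theorem two_mul_dotProduct_mulVec_self_of_sbp {Q : Matrix n n R} {j k : n}
    (hQ : Q + Qᵀ = -vecMulVec (Pi.single j 1) (Pi.single j 1) +
      vecMulVec (Pi.single k 1) (Pi.single k 1)) (x : n → R) :
    2 * (x ⬝ᵥ Q *ᵥ x) = x k ^ 2 - x j ^ 2 := by
  rw [← dotProduct_add_transpose_mulVec_self, hQ, add_mulVec, neg_mulVec, dotProduct_add,
    dotProduct_neg, dotProduct_vecMulVec_single_mulVec_self,
    dotProduct_vecMulVec_single_mulVec_self, neg_add_eq_sub]

theorem diagonal_mul_mulVec_add_smul_single (g : n → R) (Q : Matrix n n R) (x : n → R) (j : n)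
    (c : R) :
    (diagonal g * Q) *ᵥ x + (g j * c) • Pi.single j 1 =
      diagonal g *ᵥ (Q *ᵥ x + c • Pi.single j 1) := by
  rw [← mulVec_mulVec, mulVec_add, mulVec_smul, diagonal_mulVec_single, mul_one, mul_comm, mul_smul,
    ← Pi.single_smul', smul_eq_mul, mul_one]

theorem inv_mul_mul_mul_inv_eq_one {A P : Matrix n n R} (hAP : Commute A P) (hA : IsUnit A.det)
    (hP : IsUnit P.det) : A⁻¹ * P * (A * P⁻¹) = 1 :=
  calc A⁻¹ * P * (A * P⁻¹) = A⁻¹ * (P * A) * P⁻¹ := by simp only [mul_assoc]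
    _ = A⁻¹ * A * (P * P⁻¹) := by rw [← hAP.eq]; simp only [mul_assoc]
    _ = 1 := by rw [nonsing_inv_mul _ hA, mul_nonsing_inv _ hP, one_mul]

end Algebra

/-- Strict stability of the SBP-SAT discretization of the coordinate-transformed
advection equation: in the weighted norm `‖v‖²_ξ = vᵀA⁻¹Pv` the discrete energy
rate is exactly `−v_N²`. -/
theorem stmt_12 {N : ℕ} (P Q A : Matrix (Fin (N + 1)) (Fin (N + 1)) ℝ)
    (hPdiag : ∃ d : Fin (N + 1) → ℝ, P = Matrix.diagonal d) (hP : P.PosDef)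
    (hQ : Q + Qᵀ = -Matrix.vecMulVec (Pi.single 0 1) (Pi.single 0 1) +
      Matrix.vecMulVec (Pi.single (Fin.last N) 1) (Pi.single (Fin.last N) 1))
    (hAdiag : ∃ d : Fin (N + 1) → ℝ, A = Matrix.diagonal d) (hA : A.PosDef)
    (v : ℝ → Fin (N + 1) → ℝ)
    (hv : ∀ t, HasDerivAt v
      (-((A * P⁻¹ * Q).mulVec (v t)) -
        (1 / 2 * (A * P⁻¹) 0 0 * v t 0) • (Pi.single 0 1 : Fin (N + 1) → ℝ)) t)
    (t : ℝ) :
    HasDerivAt (fun s => v s ⬝ᵥ (A⁻¹ * P).mulVec (v s)) (-(v t (Fin.last N) ^ 2)) t := by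
  obtain ⟨p, rfl⟩ := hPdiag
  obtain ⟨a, rfl⟩ := hAdiag
  have hM : ((diagonal a)⁻¹ * diagonal p).IsSymm := by
    rw [inv_diagonal, diagonal_mul_diagonal]
    exact isSymm_diagonal _
  obtain ⟨g, hG⟩ : ∃ g, diagonal a * (diagonal p)⁻¹ = diagonal g :=
    ⟨_, by rw [inv_diagonal, diagonal_mul_diagonal]⟩
  have hMG : (diagonal a)⁻¹ * diagonal p * (diagonal a * (diagonal p)⁻¹) = 1 :=
    inv_mul_mul_mul_inv_eq_one (commute_diagonal a p) ((isUnit_iff_isUnit_det _).1 hA.isUnit)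
      ((isUnit_iff_isUnit_det _).1 hP.isUnit)
  have hrate : ((diagonal a)⁻¹ * diagonal p) *ᵥ
      (-((diagonal a * (diagonal p)⁻¹ * Q) *ᵥ v t) -
        (1 / 2 * (diagonal a * (diagonal p)⁻¹) 0 0 * v t 0) • Pi.single 0 1) =
      -(Q *ᵥ v t + (v t 0 / 2) • Pi.single 0 1) := by
    rw [← neg_add', hG, diagonal_apply_eq, show 1 / 2 * g 0 * v t 0 = g 0 * (v t 0 / 2) by ring,
      diagonal_mul_mulVec_add_smul_single, ← hG, mulVec_neg, mulVec_mulVec, hMG, one_mulVec]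
  refine ((hv t).dotProduct_mulVec_self hM).congr_deriv ?_
  rw [hrate, dotProduct_neg, dotProduct_add, dotProduct_smul, dotProduct_single_one, smul_eq_mul]
  linear_combination -two_mul_dotProduct_mulVec_self_of_sbp hQ (v t)
end

section
/- Let u : [0,1] × [0,∞) → ℝᵐ be a smooth solution of the symmetric hyperbolic system u_t + Au_x = 0, where A is a constant real symmetric m×m matrix with positive/negative part decomposition A = A⁺ + A⁻, and the boundary condition A⁺u(0,t) = A⁺g(t) holds together with A⁻u(1,t) = 0. Then d/dt ∫₀¹ |u(x,t)|² dx ≤ g(t)ᵀA⁺g(t). -/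
open Matrix intervalIntegral MeasureTheory

/-- Energy estimate for the symmetric hyperbolic system `u_t + Au_x = 0` with
characteristic boundary conditions `A⁺u(0,t) = A⁺g(t)` and `A⁻u(1,t) = 0`. -/
theorem stmt_14 {m : ℕ} (A Ap Am : Matrix (Fin m) (Fin m) ℝ)
    (hA : A.IsSymm) (hsplit : A = Ap + Am)
    (hAp : Ap.PosSemidef) (hAm : (-Am).PosSemidef)
    (u : ℝ → ℝ → Fin m → ℝ)
    (hu : ContDiff ℝ (⊤ : ℕ∞) fun p : ℝ × ℝ => u p.1 p.2)
    (g : ℝ → Fin m → ℝ)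
    (hpde : ∀ x t, deriv (fun τ => u x τ) t + A.mulVec (deriv (fun y => u y t) x) = 0)
    (hbc0 : ∀ t, Ap.mulVec (u 0 t) = Ap.mulVec (g t))
    (hbc1 : ∀ t, Am.mulVec (u 1 t) = 0) (t : ℝ) :
    deriv (fun τ => ∫ x in (0:ℝ)..1, ∑ i, u x τ i ^ 2) t ≤ g t ⬝ᵥ Ap.mulVec (g t) := by
  classical
  set U : ℝ × ℝ → (Fin m → ℝ) := fun p => u p.1 p.2 with hUdef
  have hUd : Differentiable ℝ U := hu.differentiable (by simp)
  set Vt : ℝ × ℝ → (Fin m → ℝ) := fun p => fderiv ℝ U p (0, 1) with hVtdef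
  set Vx : ℝ × ℝ → (Fin m → ℝ) := fun p => fderiv ℝ U p (1, 0) with hVxdef
  have hVt_cont : Continuous Vt :=
    (hu.continuous_fderiv (by simp)).clm_apply continuous_const
  have hVx_cont : Continuous Vx :=
    (hu.continuous_fderiv (by simp)).clm_apply continuous_const
  have hU_cont : Continuous U := hu.continuous
  -- partial derivative in time
  have ht : ∀ x τ : ℝ, HasDerivAt (fun σ => u x σ) (Vt (x, τ)) τ := by
    intro x τ
    have hcurve : HasDerivAt (fun σ : ℝ => ((x, σ) : ℝ × ℝ)) ((0 : ℝ), (1 : ℝ)) τ :=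
      (hasDerivAt_const τ x).prodMk (hasDerivAt_id τ)
    exact (hUd (x, τ)).hasFDerivAt.comp_hasDerivAt τ hcurve
  -- partial derivative in space
  have hxd : ∀ x τ : ℝ, HasDerivAt (fun y => u y τ) (Vx (x, τ)) x := by
    intro x τ
    have hcurve : HasDerivAt (fun y : ℝ => ((y, τ) : ℝ × ℝ)) ((1 : ℝ), (0 : ℝ)) x :=
      (hasDerivAt_id x).prodMk (hasDerivAt_const x τ)
    exact (hUd (x, τ)).hasFDerivAt.comp_hasDerivAt x hcurve
  -- the PDE in terms of Vt, Vx
  have hAVx : ∀ x τ : ℝ, A.mulVec (Vx (x, τ)) = -Vt (x, τ) := by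
    intro x τ
    have h1 : deriv (fun σ => u x σ) τ = Vt (x, τ) := (ht x τ).deriv
    have h2 : deriv (fun y => u y τ) x = Vx (x, τ) := (hxd x τ).deriv
    have h := hpde x τ
    rw [h1, h2] at h
    exact eq_neg_of_add_eq_zero_right h
  -- componentwise derivatives
  have htc : ∀ x τ (i : Fin m), HasDerivAt (fun σ => u x σ i) (Vt (x, τ) i) τ :=
    fun x τ i => hasDerivAt_pi.1 (ht x τ) i
  have hxc : ∀ x τ (i : Fin m), HasDerivAt (fun y => u y τ i) (Vx (x, τ) i) x :=
    fun x τ i => hasDerivAt_pi.1 (hxd x τ) i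
  -- continuity of components (jointly)
  have hu_comp_cont : ∀ i : Fin m, Continuous fun p : ℝ × ℝ => u p.1 p.2 i :=
    fun i => (continuous_apply i).comp hU_cont
  have hVt_comp_cont : ∀ i : Fin m, Continuous fun p : ℝ × ℝ => Vt p i :=
    fun i => (continuous_apply i).comp hVt_cont
  -- the integrand and its time derivative
  set F : ℝ → ℝ → ℝ := fun τ x => ∑ i, u x τ i ^ 2 with hFdef
  set F' : ℝ → ℝ → ℝ := fun τ x => 2 * (u x τ ⬝ᵥ Vt (x, τ)) with hF'def
  have hFderiv : ∀ x τ : ℝ, HasDerivAt (fun σ => F σ x) (F' τ x) τ := by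
    intro x τ
    have h : HasDerivAt (fun σ => ∑ i, u x σ i ^ 2)
        (∑ i, 2 * u x τ i ^ 1 * Vt (x, τ) i) τ :=
      HasDerivAt.fun_sum fun i _ => by simpa using (htc x τ i).fun_pow 2
    convert h using 1
    simp only [hF'def, dotProduct, Finset.mul_sum, pow_one]
    exact Finset.sum_congr rfl fun i _ => by ring
  -- joint continuity of F'
  have hF'_jcont : Continuous fun p : ℝ × ℝ => F' p.2 p.1 := by
    apply Continuous.mul continuous_const
    exact continuous_finset_sum _ fun i _ => (hu_comp_cont i).mul (hVt_comp_cont i)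
  have hF_jcont : Continuous fun p : ℝ × ℝ => F p.2 p.1 :=
    continuous_finset_sum _ fun i _ => (hu_comp_cont i).pow 2
  -- differentiation under the integral sign
  obtain ⟨C, hC⟩ : ∃ C : ℝ, ∀ p ∈ Set.Icc (0:ℝ) 1 ×ˢ Set.Icc (t-1) (t+1),
      |F' p.2 p.1| ≤ C := by
    have hne : (Set.Icc (0:ℝ) 1 ×ˢ Set.Icc (t-1) (t+1)).Nonempty :=
      ⟨(0, t), by refine ⟨⟨?_, ?_⟩, ?_, ?_⟩ <;> norm_num⟩
    obtain ⟨p₀, -, hmax⟩ := (isCompact_Icc.prod isCompact_Icc).exists_isMaxOn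
      hne (continuous_abs.comp hF'_jcont).continuousOn
    exact ⟨|F' p₀.2 p₀.1|, fun p hp => hmax hp⟩
  have key : HasDerivAt (fun τ => ∫ x in (0:ℝ)..1, F τ x)
      (∫ x in (0:ℝ)..1, F' t x) t := by
    have := (hasDerivAt_integral_of_dominated_loc_of_deriv_le (μ := volume)
      (F := F) (F' := F') (x₀ := t) (a := 0) (b := 1) (bound := fun _ => C)
      (s := Metric.ball t 1) (Metric.ball_mem_nhds t one_pos)
      (Filter.Eventually.of_forall fun τ =>
        ((hF_jcont.comp (continuous_id.prodMk continuous_const)).aestronglyMeasurable))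
      ((hF_jcont.comp (continuous_id.prodMk continuous_const)).intervalIntegrable 0 1)
      ((hF'_jcont.comp (continuous_id.prodMk continuous_const)).aestronglyMeasurable)
      (Filter.Eventually.of_forall fun x hx τ hτ => by
        have hx' : x ∈ Set.Icc (0:ℝ) 1 := by
          rw [Set.uIoc_of_le (by norm_num : (0:ℝ) ≤ 1)] at hx
          exact ⟨le_of_lt hx.1, hx.2⟩
        have hτ' : τ ∈ Set.Icc (t-1) (t+1) := by
          rw [Metric.mem_ball, Real.dist_eq, abs_sub_lt_iff] at hτ
          constructor <;> linarith
        simpa using hC (x, τ) ⟨hx', hτ'⟩)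
      (intervalIntegrable_const)
      (Filter.Eventually.of_forall fun x _ τ _ => hFderiv x τ))
    exact this.2
  have hderiv_eq : deriv (fun τ => ∫ x in (0:ℝ)..1, ∑ i, u x τ i ^ 2) t
      = ∫ x in (0:ℝ)..1, F' t x := key.deriv
  rw [hderiv_eq]
  -- now compute the integral via FTC
  set q : ℝ → ℝ := fun x => u x t ⬝ᵥ A.mulVec (u x t) with hqdef
  have hq : ∀ x : ℝ, HasDerivAt q (-(F' t x)) x := by
    intro x
    have h : HasDerivAt (fun y => ∑ i, ∑ j, A i j * (u y t i * u y t j))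
        (∑ i, ∑ j, A i j * (Vx (x, t) i * u x t j + u x t i * Vx (x, t) j)) x := by
      refine HasDerivAt.fun_sum fun i _ => HasDerivAt.fun_sum fun j _ => ?_
      exact ((hxc x t i).mul (hxc x t j)).const_mul (A i j)
    have hqeq : q = fun y => ∑ i, ∑ j, A i j * (u y t i * u y t j) := by
      funext y
      simp only [hqdef, dotProduct, mulVec, Finset.mul_sum]
      exact Finset.sum_congr rfl fun i _ => Finset.sum_congr rfl fun j _ => by ring
    rw [hqeq]
    convert h using 1
    -- need: -(F' t x) = ∑ i, ∑ j, A i j * (Vx i * u j + u i * Vx j)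
    have hsym : ∀ i j, A i j = A j i := fun i j => by
      have := congrFun (congrFun hA j) i
      simpa [Matrix.transpose_apply] using this
    have hAVxe : ∀ i, (∑ j, A i j * Vx (x, t) j) = -Vt (x, t) i := by
      intro i
      have := congrFun (hAVx x t) i
      simpa [Matrix.mulVec, dotProduct] using this
    have expand : ∑ i, ∑ j, A i j * (Vx (x, t) i * u x t j + u x t i * Vx (x, t) j)
        = (∑ i, ∑ j, A i j * Vx (x, t) i * u x t j)
          + ∑ i, ∑ j, A i j * u x t i * Vx (x, t) j := by
      rw [← Finset.sum_add_distrib]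
      refine Finset.sum_congr rfl fun i _ => ?_
      rw [← Finset.sum_add_distrib]
      exact Finset.sum_congr rfl fun j _ => by ring
    have swap : (∑ i, ∑ j, A i j * Vx (x, t) i * u x t j)
        = ∑ i, ∑ j, A i j * u x t i * Vx (x, t) j := by
      rw [Finset.sum_comm]
      refine Finset.sum_congr rfl fun i _ => Finset.sum_congr rfl fun j _ => ?_
      rw [hsym j i]; ring
    have term : (∑ i, ∑ j, A i j * u x t i * Vx (x, t) j) = -(u x t ⬝ᵥ Vt (x, t)) := by
      have : ∀ i, ∑ j, A i j * u x t i * Vx (x, t) j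
          = u x t i * ∑ j, A i j * Vx (x, t) j := by
        intro i; rw [Finset.mul_sum]; exact Finset.sum_congr rfl fun j _ => by ring
      simp_rw [this, hAVxe]
      simp [dotProduct, Finset.sum_neg_distrib]
    rw [expand, swap, term]
    simp [hF'def]; ring
  have hint : ∫ x in (0:ℝ)..1, F' t x = q 0 - q 1 := by
    have hFTC : ∫ x in (0:ℝ)..1, -(F' t x) = q 1 - q 0 := by
      apply intervalIntegral.integral_eq_sub_of_hasDerivAt
      · exact fun x _ => hq x
      · exact ((hF'_jcont.comp (continuous_id.prodMk continuous_const)).neg).intervalIntegrable 0 1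
    rw [intervalIntegral.integral_neg] at hFTC
    linarith
  rw [hint]
  -- final algebra with boundary conditions
  have hApSymm : Apᵀ = Ap := by
    have := hAp.1
    rwa [Matrix.IsHermitian, Matrix.conjTranspose_eq_transpose_of_trivial] at this
  have hq0 : q 0 = g t ⬝ᵥ Ap.mulVec (g t) + u 0 t ⬝ᵥ Am.mulVec (u 0 t) := by
    have h1 : q 0 = u 0 t ⬝ᵥ Ap.mulVec (u 0 t) + u 0 t ⬝ᵥ Am.mulVec (u 0 t) := by
      simp [hqdef, hsplit, Matrix.add_mulVec, dotProduct_add]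
    have h2 : u 0 t ⬝ᵥ Ap.mulVec (u 0 t) = g t ⬝ᵥ Ap.mulVec (g t) :=
      calc u 0 t ⬝ᵥ Ap.mulVec (u 0 t) = u 0 t ⬝ᵥ Ap.mulVec (g t) := by rw [hbc0 t]
        _ = (u 0 t ᵥ* Ap) ⬝ᵥ g t := Matrix.dotProduct_mulVec _ _ _
        _ = (Ap.mulVec (u 0 t)) ⬝ᵥ g t := by rw [← Matrix.vecMul_transpose Ap (u 0 t), hApSymm]
        _ = (Ap.mulVec (g t)) ⬝ᵥ g t := by rw [hbc0 t]
        _ = g t ⬝ᵥ Ap.mulVec (g t) := dotProduct_comm _ _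
    rw [h1, h2]
  have hq1 : q 1 = u 1 t ⬝ᵥ Ap.mulVec (u 1 t) := by
    simp [hqdef, hsplit, Matrix.add_mulVec, dotProduct_add, hbc1 t]
  have hAm0 : u 0 t ⬝ᵥ Am.mulVec (u 0 t) ≤ 0 := by
    have := hAm.dotProduct_mulVec_nonneg (u 0 t)
    simp only [star_trivial, Matrix.neg_mulVec, dotProduct_neg] at this
    linarith
  have hAp1 : 0 ≤ u 1 t ⬝ᵥ Ap.mulVec (u 1 t) := by
    have := hAp.dotProduct_mulVec_nonneg (u 1 t)
    simpa using this
  rw [hq0, hq1]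
  linarith
end
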